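/- Let U ⊆ ℝ² be a nonempty connected open set and let a : U → ℝ be a nonconstant harmonic function (∂²a/∂(u^1)² + ∂²a/∂(u^2)² = 0 on U). Then the metrics g_1^{ij}(u) = e^{a(u)} δ^{ij} and g_2^{ij}(u) = δ^{ij} on U are almost compatible (in particular, the Nijenhuis tensor of the affinor v^i_j = g_1^{is} g_{2,sj} = e^{a} δ^i_j vanishes identically) but they are not compatible. -/

import Mathlib

open scoped BigOperators

/-- Partial derivative of a scalar function on `ℝ^N` in the `j`-th coordinate direction. -/
noncomputable def pd {N : ℕ} (f : (Fin N → ℝ) → ℝ) (j : Fin N) (u : Fin N → ℝ) : ℝ :=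
  fderiv ℝ f u (Pi.single j 1)

/-- Christoffel symbols `Γ^i_{jk}` of a contravariant metric `g` (with lower metric `g⁻¹`). -/
noncomputable def christoffelLow {N : ℕ} (g : (Fin N → ℝ) → Matrix (Fin N) (Fin N) ℝ)
    (i j k : Fin N) (u : Fin N → ℝ) : ℝ :=
  (1 / 2) * ∑ s, g u i s *
    (pd (fun v => (g v)⁻¹ s k) j u + pd (fun v => (g v)⁻¹ j s) k u
      - pd (fun v => (g v)⁻¹ j k) s u)

/-- Christoffel symbols with raised index `Γ^{ij}_k = g^{is} Γ^j_{sk}`. -/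
noncomputable def christoffelUp {N : ℕ} (g : (Fin N → ℝ) → Matrix (Fin N) (Fin N) ℝ)
    (i j k : Fin N) (u : Fin N → ℝ) : ℝ :=
  ∑ s, g u i s * christoffelLow g j s k u

/-- Riemann curvature tensor `R^i_{jkl}`. -/
noncomputable def riemannLow {N : ℕ} (g : (Fin N → ℝ) → Matrix (Fin N) (Fin N) ℝ)
    (i j k l : Fin N) (u : Fin N → ℝ) : ℝ :=
  pd (christoffelLow g i j l) k u - pd (christoffelLow g i j k) l u
    + ∑ p, christoffelLow g i p k u * christoffelLow g p j l u
    - ∑ p, christoffelLow g i p l u * christoffelLow g p j k u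

/-- Riemann curvature tensor with raised index `R^{ij}_{kl} = g^{is} R^j_{skl}`. -/
noncomputable def riemannUp {N : ℕ} (g : (Fin N → ℝ) → Matrix (Fin N) (Fin N) ℝ)
    (i j k l : Fin N) (u : Fin N → ℝ) : ℝ :=
  ∑ s, g u i s * riemannLow g j s k l u

/-- A smooth contravariant metric on `U`: smooth, symmetric and invertible at every point. -/
def IsMetricOn {N : ℕ} (U : Set (Fin N → ℝ))
    (g : (Fin N → ℝ) → Matrix (Fin N) (Fin N) ℝ) : Prop :=
  (∀ i j, ContDiffOn ℝ (⊤ : ℕ∞) (fun u => g u i j) U) ∧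
  (∀ u ∈ U, (g u).IsSymm) ∧ (∀ u ∈ U, IsUnit (g u).det)

/-- Almost compatibility of two contravariant metrics on `U`. -/
def AlmostCompatibleOn {N : ℕ} (U : Set (Fin N → ℝ))
    (g₁ g₂ : (Fin N → ℝ) → Matrix (Fin N) (Fin N) ℝ) : Prop :=
  ∀ l₁ l₂ : ℝ, (∀ u ∈ U, IsUnit (l₁ • g₁ u + l₂ • g₂ u).det) →
    ∀ u ∈ U, ∀ i j k, christoffelUp (fun v => l₁ • g₁ v + l₂ • g₂ v) i j k u =
      l₁ * christoffelUp g₁ i j k u + l₂ * christoffelUp g₂ i j k u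

/-- Compatibility of two contravariant metrics on `U`. -/
def CompatibleOn {N : ℕ} (U : Set (Fin N → ℝ))
    (g₁ g₂ : (Fin N → ℝ) → Matrix (Fin N) (Fin N) ℝ) : Prop :=
  ∀ l₁ l₂ : ℝ, (∀ u ∈ U, IsUnit (l₁ • g₁ u + l₂ • g₂ u).det) →
    ∀ u ∈ U,
      (∀ i j k, christoffelUp (fun v => l₁ • g₁ v + l₂ • g₂ v) i j k u =
        l₁ * christoffelUp g₁ i j k u + l₂ * christoffelUp g₂ i j k u) ∧
      (∀ i j k l, riemannUp (fun v => l₁ • g₁ v + l₂ • g₂ v) i j k l u =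
        l₁ * riemannUp g₁ i j k l u + l₂ * riemannUp g₂ i j k l u)

/-- Nijenhuis tensor `N^k_{ij}` of an affinor `v^i_j(u)`. -/
noncomputable def nijenhuis {N : ℕ} (v : (Fin N → ℝ) → Matrix (Fin N) (Fin N) ℝ)
    (k i j : Fin N) (u : Fin N → ℝ) : ℝ :=
  ∑ s, (v u s i * pd (fun w => v w k j) s u - v u s j * pd (fun w => v w k i) s u
    + v u k s * pd (fun w => v w s i) j u - v u k s * pd (fun w => v w s j) i u)

/-- The affinor `v^i_j = g₁^{is} g_{2,sj}` of a pair of contravariant metrics. -/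
noncomputable def affinor {N : ℕ} (g₁ g₂ : (Fin N → ℝ) → Matrix (Fin N) (Fin N) ℝ)
    (u : Fin N → ℝ) : Matrix (Fin N) (Fin N) ℝ :=
  g₁ u * (g₂ u)⁻¹

/-- A nonsingular pair of metrics: at every point the roots of
`det(g₁ - λ g₂) = 0` are real and pairwise distinct. -/
def NonsingularPairOn {N : ℕ} (U : Set (Fin N → ℝ))
    (g₁ g₂ : (Fin N → ℝ) → Matrix (Fin N) (Fin N) ℝ) : Prop :=
  ∀ u ∈ U, ∃ ev : Fin N → ℝ, Function.Injective ev ∧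
    ∀ i, (g₁ u - ev i • g₂ u).det = 0

/-- Flatness of a contravariant metric on `U`. -/
def IsFlatOn {N : ℕ} (U : Set (Fin N → ℝ))
    (g : (Fin N → ℝ) → Matrix (Fin N) (Fin N) ℝ) : Prop :=
  ∀ u ∈ U, ∀ i j k l, riemannLow g i j k l u = 0

/-- Constant Riemannian curvature `K` on `U`. -/
def HasConstCurvatureOn {N : ℕ} (U : Set (Fin N → ℝ))
    (g : (Fin N → ℝ) → Matrix (Fin N) (Fin N) ℝ) (K : ℝ) : Prop :=
  ∀ u ∈ U, ∀ i j k l, riemannUp g i j k l u =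
    K * ((if i = l then (1 : ℝ) else 0) * (if j = k then (1 : ℝ) else 0)
      - (if i = k then (1 : ℝ) else 0) * (if j = l then (1 : ℝ) else 0))

/-- The tensor `M^{ijk}` of a pair of contravariant metrics. -/
noncomputable def MTensor {N : ℕ} (g₁ g₂ : (Fin N → ℝ) → Matrix (Fin N) (Fin N) ℝ)
    (i j k : Fin N) (u : Fin N → ℝ) : ℝ :=
  ∑ s, (g₁ u i s * christoffelUp g₂ j k s u - g₂ u j s * christoffelUp g₁ i k s u
    - g₁ u j s * christoffelUp g₂ i k s u + g₂ u i s * christoffelUp g₁ j k s u)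

section Aux

open Matrix

noncomputable def dm (f : (Fin 2 → ℝ) → ℝ) : (Fin 2 → ℝ) → Matrix (Fin 2) (Fin 2) ℝ :=
  fun u => Matrix.diagonal (fun _ => f u)

lemma inv_diag (c : ℝ) :
    (Matrix.diagonal (fun _ : Fin 2 => c))⁻¹ = Matrix.diagonal (fun _ : Fin 2 => c⁻¹) := by
  ext i j
  rw [Matrix.inv_def, Matrix.adjugate_fin_two, Matrix.det_fin_two]
  fin_cases i <;> fin_cases j <;>
    simp [Matrix.diagonal_apply, Ring.inverse_eq_inv] <;>
    rcases eq_or_ne c 0 with h | h <;> simp [h] <;> field_simp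

variable {p q : (Fin 2 → ℝ) → ℝ} {u : Fin 2 → ℝ} {j : Fin 2}

lemma pd_const (c : ℝ) (j : Fin 2) (u : Fin 2 → ℝ) : pd (fun _ => c) j u = 0 := by
  simp [pd, fderiv_const_apply]

lemma pd_congr (h : p =ᶠ[nhds u] q) (j : Fin 2) : pd p j u = pd q j u := by
  unfold pd; rw [h.fderiv_eq]

lemma pd_add (hp : DifferentiableAt ℝ p u) (hq : DifferentiableAt ℝ q u) (j : Fin 2) :
    pd (fun v => p v + q v) j u = pd p j u + pd q j u := by
  unfold pd; rw [fderiv_fun_add hp hq]; simp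

lemma pd_mul (hp : DifferentiableAt ℝ p u) (hq : DifferentiableAt ℝ q u) (j : Fin 2) :
    pd (fun v => p v * q v) j u = pd p j u * q u + p u * pd q j u := by
  unfold pd; rw [fderiv_fun_mul hp hq]; simp; ring

lemma pd_const_mul (hp : DifferentiableAt ℝ p u) (c : ℝ) (j : Fin 2) :
    pd (fun v => c * p v) j u = c * pd p j u := by
  unfold pd; rw [fderiv_const_mul hp]; simp

lemma pd_neg (j : Fin 2) : pd (fun v => -(p v)) j u = -pd p j u := by
  unfold pd; rw [fderiv_fun_neg]; simp

lemma pd_exp (hp : DifferentiableAt ℝ p u) (j : Fin 2) :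
    pd (fun v => Real.exp (p v)) j u = Real.exp (p u) * pd p j u := by
  unfold pd; rw [fderiv_exp hp]; simp

lemma pd_inv (hp : DifferentiableAt ℝ p u) (h0 : p u ≠ 0) (j : Fin 2) :
    pd (fun v => (p v)⁻¹) j u = -((p u) ^ 2)⁻¹ * pd p j u := by
  unfold pd
  have h : HasFDerivAt (fun v => (p v)⁻¹) (-(p u ^ 2)⁻¹ • fderiv ℝ p u) u :=
    (hasDerivAt_inv h0).comp_hasFDerivAt u hp.hasFDerivAt
  rw [h.fderiv]; simp

lemma chLow_one (i j k : Fin 2) (u : Fin 2 → ℝ) :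
    christoffelLow (fun _ => (1 : Matrix (Fin 2) (Fin 2) ℝ)) i j k u = 0 := by
  simp [christoffelLow, pd, fderiv_const_apply]

lemma chUp_one (i j k : Fin 2) (u : Fin 2 → ℝ) :
    christoffelUp (fun _ => (1 : Matrix (Fin 2) (Fin 2) ℝ)) i j k u = 0 := by
  simp [christoffelUp, chLow_one]

lemma det_dm (f : (Fin 2 → ℝ) → ℝ) (u : Fin 2 → ℝ) : (dm f u).det = f u * f u := by
  simp [dm, Matrix.det_fin_two, Matrix.diagonal]

lemma chLow_dm (f : (Fin 2 → ℝ) → ℝ) (u : Fin 2 → ℝ)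
    (hf : DifferentiableAt ℝ f u) (h0 : f u ≠ 0) (i j k : Fin 2) :
    christoffelLow (dm f) i j k u =
      -(2 * f u)⁻¹ * ((if i = k then (1:ℝ) else 0) * pd f j u
        + (if i = j then (1:ℝ) else 0) * pd f k u
        - (if j = k then (1:ℝ) else 0) * pd f i u) := by
  have hrw : ∀ s k : Fin 2, (fun v => (dm f v)⁻¹ s k) =
      (fun v => if s = k then (f v)⁻¹ else 0) := by
    intro s k
    funext v
    rw [show (dm f v)⁻¹ = Matrix.diagonal (fun _ : Fin 2 => (f v)⁻¹) from inv_diag (f v)]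
    by_cases h : s = k <;> simp [Matrix.diagonal_apply, h]
  unfold christoffelLow
  simp only [hrw]
  fin_cases i <;> fin_cases j <;> fin_cases k <;>
    simp [Fin.sum_univ_two, dm, Matrix.diagonal_apply, pd_const, pd_inv hf h0] <;>
    field_simp <;> ring

lemma chUp_dm (f : (Fin 2 → ℝ) → ℝ) (u : Fin 2 → ℝ)
    (hf : DifferentiableAt ℝ f u) (h0 : f u ≠ 0) (i j k : Fin 2) :
    christoffelUp (dm f) i j k u =
      -(1/2) * ((if j = k then (1:ℝ) else 0) * pd f i u
        + (if i = j then (1:ℝ) else 0) * pd f k u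
        - (if i = k then (1:ℝ) else 0) * pd f j u) := by
  unfold christoffelUp
  fin_cases i <;> fin_cases j <;> fin_cases k <;>
    simp [Fin.sum_univ_two, dm, Matrix.diagonal_apply, chLow_dm f u hf h0] <;>
    field_simp <;> ring

end Aux
section Aux2

lemma combine_metric (a : (Fin 2 → ℝ) → ℝ) (l₁ l₂ : ℝ) :
    (fun v => l₁ • Matrix.diagonal (fun _ : Fin 2 => Real.exp (a v))
        + l₂ • (1 : Matrix (Fin 2) (Fin 2) ℝ)) =
      dm (fun v => l₁ * Real.exp (a v) + l₂) := by
  funext v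
  ext i j
  fin_cases i <;> fin_cases j <;>
    simp [dm, Matrix.diagonal_apply, Matrix.one_apply, Matrix.add_apply, Matrix.smul_apply]

lemma riemannUp_one (i j k l : Fin 2) (u : Fin 2 → ℝ) :
    riemannUp (fun _ => (1 : Matrix (Fin 2) (Fin 2) ℝ)) i j k l u = 0 := by
  have h : ∀ i j k : Fin 2, christoffelLow (fun _ => (1 : Matrix (Fin 2) (Fin 2) ℝ)) i j k
      = fun _ => 0 := fun i j k => funext fun u => chLow_one i j k u
  simp [riemannUp, riemannLow, h, chLow_one, pd_const]

variable {U : Set (Fin 2 → ℝ)} {a : (Fin 2 → ℝ) → ℝ}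

lemma pd_diff (hUopen : IsOpen U) (ha : ContDiffOn ℝ (⊤ : ℕ∞) a U) {u : Fin 2 → ℝ} (hu : u ∈ U)
    (m : Fin 2) : DifferentiableAt ℝ (fun w => pd a m w) u := by
  have hat : ContDiffAt ℝ (⊤ : ℕ∞) a u := ha.contDiffAt (hUopen.mem_nhds hu)
  have h1 : ContDiffAt ℝ (⊤ : ℕ∞) (fderiv ℝ a) u :=
    hat.fderiv_right (le_of_eq (by simp))
  have h2 : ContDiffAt ℝ (⊤ : ℕ∞) (fun w => (fderiv ℝ a w) (Pi.single m 1)) u :=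
    h1.clm_apply contDiffAt_const
  exact h2.differentiableAt (by simp)

end Aux2
section Aux3

variable {U : Set (Fin 2 → ℝ)} {a : (Fin 2 → ℝ) → ℝ}

lemma riemannUp_dm (hUopen : IsOpen U) (ha : ContDiffOn ℝ (⊤ : ℕ∞) a U)
    (hharm : ∀ u ∈ U, pd (fun w => pd a 0 w) 0 u + pd (fun w => pd a 1 w) 1 u = 0)
    (l₁ l₂ : ℝ) (hl₁ : 0 < l₁) (hl₂ : 0 ≤ l₂) {u : Fin 2 → ℝ} (hu : u ∈ U) :
    riemannUp (dm (fun v => l₁ * Real.exp (a v) + l₂)) 0 1 0 1 u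
      = -(l₁ * l₂ * Real.exp (a u) * ((pd a 0 u) ^ 2 + (pd a 1 u) ^ 2))
          / (2 * (l₁ * Real.exp (a u) + l₂)) := by
  set f : (Fin 2 → ℝ) → ℝ := fun v => l₁ * Real.exp (a v) + l₂ with hfdef
  have hfpos : ∀ v, 0 < f v := fun v =>
    add_pos_of_pos_of_nonneg (mul_pos hl₁ (Real.exp_pos _)) hl₂
  have hfne : ∀ v, f v ≠ 0 := fun v => (hfpos v).ne'
  have hdaU : ∀ v ∈ U, DifferentiableAt ℝ a v := fun v hv =>
    (ha.contDiffAt (hUopen.mem_nhds hv)).differentiableAt (by simp)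
  have hfdU : ∀ v ∈ U, DifferentiableAt ℝ f v := fun v hv =>
    (((hdaU v hv).exp).const_mul l₁).add_const l₂
  have hpdf : ∀ v ∈ U, ∀ m, pd f m v = l₁ * Real.exp (a v) * pd a m v := by
    intro v hv m
    have h1 : pd f m v
        = pd (fun w => l₁ * Real.exp (a w)) m v + pd (fun _ => l₂) m v :=
      pd_add (((hdaU v hv).exp).const_mul l₁) (differentiableAt_const _) m
    rw [h1, pd_const, pd_const_mul ((hdaU v hv).exp) l₁ m, pd_exp (hdaU v hv) m]
    ring
  have hev : ∀ᶠ v in nhds u, v ∈ U := hUopen.eventually_mem hu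
  have hch1 : christoffelLow (dm f) 1 0 1
      =ᶠ[nhds u] fun v => -((2 * f v)⁻¹ * (l₁ * Real.exp (a v) * pd a 0 v)) := by
    filter_upwards [hev] with v hv
    rw [chLow_dm f v (hfdU v hv) (hfne v) 1 0 1, hpdf v hv 0, hpdf v hv 1]
    norm_num
  have hch2 : christoffelLow (dm f) 1 0 0
      =ᶠ[nhds u] fun v => (2 * f v)⁻¹ * (l₁ * Real.exp (a v) * pd a 1 v) := by
    filter_upwards [hev] with v hv
    rw [chLow_dm f v (hfdU v hv) (hfne v) 1 0 0, hpdf v hv 0, hpdf v hv 1]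
    norm_num
  have hda := hdaU u hu
  have hfd := hfdU u hu
  have hne2 : (2 : ℝ) * f u ≠ 0 := by
    have := hfpos u; positivity
  have hE : DifferentiableAt ℝ (fun v => l₁ * Real.exp (a v)) u := (hda.exp).const_mul l₁
  have hP : ∀ m, DifferentiableAt ℝ (fun w => pd a m w) u := pd_diff hUopen ha hu
  have hI : DifferentiableAt ℝ (fun v => (2 * f v)⁻¹) u := (hfd.const_mul 2).inv hne2
  have hQ : ∀ m, DifferentiableAt ℝ (fun v => l₁ * Real.exp (a v) * pd a m v) u :=
    fun m => hE.mul (hP m)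
  have key : ∀ m : Fin 2, pd (fun v => (2 * f v)⁻¹ * (l₁ * Real.exp (a v) * pd a m v)) m u
      = (-(((2 * f u) ^ 2)⁻¹) * (2 * (l₁ * Real.exp (a u) * pd a m u)))
          * (l₁ * Real.exp (a u) * pd a m u)
        + (2 * f u)⁻¹ * ((l₁ * (Real.exp (a u) * pd a m u)) * pd a m u
            + l₁ * Real.exp (a u) * pd (fun w => pd a m w) m u) := by
    intro m
    have h1 : pd (fun v => (2 * f v)⁻¹) m u = -(((2 * f u) ^ 2)⁻¹) * (2 * pd f m u) := by
      rw [pd_inv (hfd.const_mul 2) hne2 m, pd_const_mul hfd 2 m]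
    have h2 : pd (fun v => l₁ * Real.exp (a v) * pd a m v) m u
        = (l₁ * (Real.exp (a u) * pd a m u)) * pd a m u
          + (l₁ * Real.exp (a u)) * pd (fun w => pd a m w) m u := by
      rw [pd_mul hE (hP m) m, pd_const_mul hda.exp l₁ m, pd_exp hda m]
    rw [pd_mul hI (hQ m) m, h1, h2, hpdf u hu m]
  have e1 : pd (christoffelLow (dm f) 1 0 1) 0 u
      = -pd (fun v => (2 * f v)⁻¹ * (l₁ * Real.exp (a v) * pd a 0 v)) 0 u := by
    rw [pd_congr hch1 0]
    exact pd_neg 0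
  have e2 : pd (christoffelLow (dm f) 1 0 0) 1 u
      = pd (fun v => (2 * f v)⁻¹ * (l₁ * Real.exp (a v) * pd a 1 v)) 1 u :=
    pd_congr hch2 1
  have hc : ∀ i j k : Fin 2, christoffelLow (dm f) i j k u =
      -(2 * f u)⁻¹ * ((if i = k then (1:ℝ) else 0) * pd f j u
        + (if i = j then (1:ℝ) else 0) * pd f k u
        - (if j = k then (1:ℝ) else 0) * pd f i u) := chLow_dm f u hfd (hfne u)
  have hS1 : pd (fun w => pd a 1 w) 1 u = -pd (fun w => pd a 0 w) 0 u := by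
    linarith [hharm u hu]
  have hexp : riemannUp (dm f) 0 1 0 1 u = f u * riemannLow (dm f) 1 0 0 1 u := by
    simp [riemannUp, Fin.sum_univ_two, dm, Matrix.diagonal_apply]
  rw [hexp]
  unfold riemannLow
  rw [Fin.sum_univ_two, Fin.sum_univ_two, e1, e2, key 0, key 1,
    hc 1 0 0, hc 1 1 0, hc 0 0 1, hc 1 0 1, hc 1 1 1, hc 0 0 0,
    hpdf u hu 0, hpdf u hu 1, hS1]
  have hAu : f u = l₁ * Real.exp (a u) + l₂ := rfl
  rw [hAu]
  have hA : (0:ℝ) < Real.exp (a u) := Real.exp_pos _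
  have hden : l₁ * Real.exp (a u) + l₂ ≠ 0 := hfne u
  field_simp
  ring

end Aux3
/-- for a nonconstant harmonic `a`, the metrics `g₁^{ij} = e^{a} δ^{ij}`
and `g₂^{ij} = δ^{ij}` are almost compatible (their Nijenhuis tensor vanishes) but not
compatible. -/
theorem harmonic_conformal_almost_compatible_not_compatible
    (U : Set (Fin 2 → ℝ)) (hUopen : IsOpen U) (hUne : U.Nonempty)
    (hUconn : IsConnected U)
    (a : (Fin 2 → ℝ) → ℝ) (ha : ContDiffOn ℝ (⊤ : ℕ∞) a U)
    (hharm : ∀ u ∈ U, pd (fun w => pd a 0 w) 0 u + pd (fun w => pd a 1 w) 1 u = 0)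
    (hnc : ∃ u ∈ U, ∃ u' ∈ U, a u ≠ a u') :
    AlmostCompatibleOn U
        (fun u => Matrix.diagonal (fun _ : Fin 2 => Real.exp (a u)))
        (fun _ => (1 : Matrix (Fin 2) (Fin 2) ℝ)) ∧
      (∀ u ∈ U, ∀ k i j,
        nijenhuis (affinor
          (fun u => Matrix.diagonal (fun _ : Fin 2 => Real.exp (a u)))
          (fun _ => (1 : Matrix (Fin 2) (Fin 2) ℝ))) k i j u = 0) ∧
      ¬ CompatibleOn U
        (fun u => Matrix.diagonal (fun _ : Fin 2 => Real.exp (a u)))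
        (fun _ => (1 : Matrix (Fin 2) (Fin 2) ℝ)) := by
  have hdaU : ∀ v ∈ U, DifferentiableAt ℝ a v := fun v hv =>
    (ha.contDiffAt (hUopen.mem_nhds hv)).differentiableAt (by simp)
  have hg1dm : (fun u => Matrix.diagonal (fun _ : Fin 2 => Real.exp (a u)))
      = dm (fun v => Real.exp (a v)) := rfl
  refine ⟨?_, ?_, ?_⟩
  · -- almost compatible
    intro l₁ l₂ hdet u hu i j k
    have hg : (fun v => l₁ • Matrix.diagonal (fun _ : Fin 2 => Real.exp (a v))
        + l₂ • (1 : Matrix (Fin 2) (Fin 2) ℝ)) = dm (fun v => l₁ * Real.exp (a v) + l₂) :=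
      combine_metric a l₁ l₂
    have hdet' : IsUnit ((dm (fun v => l₁ * Real.exp (a v) + l₂)) u).det := by
      have := hdet u hu
      rwa [show (l₁ • Matrix.diagonal (fun _ : Fin 2 => Real.exp (a u))
          + l₂ • (1 : Matrix (Fin 2) (Fin 2) ℝ)) = (dm (fun v => l₁ * Real.exp (a v) + l₂)) u
        from congrFun hg u] at this
    rw [det_dm] at hdet'
    have hfne : l₁ * Real.exp (a u) + l₂ ≠ 0 := by
      intro h
      rw [h] at hdet'
      simp at hdet'
    have hfd : DifferentiableAt ℝ (fun v => l₁ * Real.exp (a v) + l₂) u :=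
      (((hdaU u hu).exp).const_mul l₁).add_const l₂
    have hlhs : christoffelUp (fun v => l₁ • Matrix.diagonal (fun _ : Fin 2 => Real.exp (a v))
        + l₂ • (1 : Matrix (Fin 2) (Fin 2) ℝ)) i j k u
        = christoffelUp (dm (fun v => l₁ * Real.exp (a v) + l₂)) i j k u := by rw [hg]
    rw [hlhs, chUp_dm _ u hfd hfne i j k, hg1dm,
      chUp_dm _ u (hdaU u hu).exp (Real.exp_ne_zero _) i j k, chUp_one]
    have hp1 : ∀ m, pd (fun v => l₁ * Real.exp (a v) + l₂) m u
        = l₁ * (Real.exp (a u) * pd a m u) := by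
      intro m
      rw [pd_add (((hdaU u hu).exp).const_mul l₁) (differentiableAt_const _) m, pd_const,
        pd_const_mul ((hdaU u hu).exp) l₁ m, pd_exp (hdaU u hu) m]
      ring
    have hp2 : ∀ m, pd (fun v => Real.exp (a v)) m u = Real.exp (a u) * pd a m u :=
      fun m => pd_exp (hdaU u hu) m
    rw [hp1 i, hp1 j, hp1 k, hp2 i, hp2 j, hp2 k]
    ring
  · -- Nijenhuis tensor vanishes
    intro u hu k i j
    have haff : affinor (fun u => Matrix.diagonal (fun _ : Fin 2 => Real.exp (a u)))
        (fun _ => (1 : Matrix (Fin 2) (Fin 2) ℝ))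
        = fun u => Matrix.diagonal (fun _ : Fin 2 => Real.exp (a u)) := by
      funext v
      simp [affinor]
    rw [haff]
    fin_cases k <;> fin_cases i <;> fin_cases j <;>
      simp [nijenhuis, Fin.sum_univ_two, Matrix.diagonal_apply, pd_const] <;> ring
  · -- not compatible
    intro hcomp
    have hgrad : ∃ u ∈ U, pd a 0 u ≠ 0 ∨ pd a 1 u ≠ 0 := by
      by_contra hcon
      push_neg at hcon
      obtain ⟨x, hx, y, hy, hxy⟩ := hnc
      apply hxy
      have hf0 : ∀ v ∈ U, fderiv ℝ a v = 0 := by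
        intro v hv
        have h0 : fderiv ℝ a v (Pi.single (0 : Fin 2) (1:ℝ)) = 0 := (hcon v hv).1
        have h1 : fderiv ℝ a v (Pi.single (1 : Fin 2) (1:ℝ)) = 0 := (hcon v hv).2
        refine ContinuousLinearMap.ext fun w => ?_
        rw [ContinuousLinearMap.zero_apply]
        have hw : w = w 0 • (Pi.single (0 : Fin 2) (1:ℝ) : Fin 2 → ℝ) + w 1 • (Pi.single (1 : Fin 2) (1:ℝ) : Fin 2 → ℝ) := by
          funext m
          fin_cases m <;> simp [Pi.single_apply]
        calc (fderiv ℝ a v) w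
            = (fderiv ℝ a v) (w 0 • (Pi.single (0 : Fin 2) (1:ℝ) : Fin 2 → ℝ) + w 1 • (Pi.single (1 : Fin 2) (1:ℝ) : Fin 2 → ℝ)) := by
              conv_lhs => rw [hw]
          _ = 0 := by simp [map_add, map_smul, h0, h1]
      have hloc : ∀ z ∈ U, ∃ r > (0:ℝ), Metric.ball z r ⊆ U ∧
          ∀ w ∈ Metric.ball z r, a w = a z := by
        intro z hz
        obtain ⟨r, hr, hsub⟩ := Metric.isOpen_iff.1 hUopen z hz
        refine ⟨r, hr, hsub, fun w hw => ?_⟩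
        have hconv : Convex ℝ (Metric.ball z r) := convex_ball z r
        have hdiff : DifferentiableOn ℝ a (Metric.ball z r) := fun v hv =>
          (hdaU v (hsub hv)).differentiableWithinAt
        have h0 : ∀ v ∈ Metric.ball z r, fderivWithin ℝ a (Metric.ball z r) v = 0 := by
          intro v hv
          rw [fderivWithin_of_isOpen Metric.isOpen_ball hv]
          exact hf0 v (hsub hv)
        exact hconv.is_const_of_fderivWithin_eq_zero hdiff h0 hw (Metric.mem_ball_self hr)
      by_contra hne
      have hSopen : IsOpen {w | w ∈ U ∧ a w = a x} := by
        rw [Metric.isOpen_iff]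
        rintro w ⟨hwU, hwa⟩
        obtain ⟨r, hr, hsub, hcst⟩ := hloc w hwU
        exact ⟨r, hr, fun w' hw' => ⟨hsub hw', by rw [hcst w' hw', hwa]⟩⟩
      have hTopen : IsOpen {w | w ∈ U ∧ a w ≠ a x} := by
        rw [Metric.isOpen_iff]
        rintro w ⟨hwU, hwa⟩
        obtain ⟨r, hr, hsub, hcst⟩ := hloc w hwU
        exact ⟨r, hr, fun w' hw' => ⟨hsub hw', by rw [hcst w' hw']; exact hwa⟩⟩
      obtain ⟨z, hzU, ⟨-, hz1⟩, -, hz2⟩ := hUconn.isPreconnected _ _ hSopen hTopen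
        (fun w hw => by by_cases h : a w = a x
                        · exact Or.inl ⟨hw, h⟩
                        · exact Or.inr ⟨hw, h⟩)
        ⟨x, hx, hx, rfl⟩ ⟨y, hy, hy, fun h => hne h.symm⟩
      exact hz2 hz1
    obtain ⟨u₀, hu₀, hD⟩ := hgrad
    have hdetfun : ∀ u ∈ U, IsUnit
        ((1:ℝ) • Matrix.diagonal (fun _ : Fin 2 => Real.exp (a u))
          + (1:ℝ) • (1 : Matrix (Fin 2) (Fin 2) ℝ)).det := by
      intro u hu
      rw [show ((1:ℝ) • Matrix.diagonal (fun _ : Fin 2 => Real.exp (a u))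
          + (1:ℝ) • (1 : Matrix (Fin 2) (Fin 2) ℝ))
          = (dm (fun v => 1 * Real.exp (a v) + 1)) u from congrFun (combine_metric a 1 1) u,
        det_dm]
      have h1 : (0:ℝ) < 1 * Real.exp (a u) + 1 := by positivity
      exact isUnit_iff_ne_zero.2 (mul_ne_zero h1.ne' h1.ne')
    have h2 := (hcomp 1 1 hdetfun u₀ hu₀).2 0 1 0 1
    rw [combine_metric a 1 1] at h2
    rw [riemannUp_dm hUopen ha hharm 1 1 one_pos zero_le_one hu₀, riemannUp_one] at h2
    have hg1 : riemannUp (fun u => Matrix.diagonal (fun _ : Fin 2 => Real.exp (a u))) 0 1 0 1 u₀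
        = 0 := by
      have h := riemannUp_dm hUopen ha hharm 1 0 one_pos le_rfl hu₀
      have hdmeq : dm (fun v => 1 * Real.exp (a v) + 0)
          = fun u => Matrix.diagonal (fun _ : Fin 2 => Real.exp (a u)) := by
        funext v
        simp [dm]
      rw [hdmeq] at h
      rw [h]
      simp
    rw [hg1] at h2
    have hDD : 0 < (pd a 0 u₀) ^ 2 + (pd a 1 u₀) ^ 2 := by
      rcases hD with h | h
      · positivity
      · positivity
    have hpos : (0:ℝ) < (1 * 1 * Real.exp (a u₀) * ((pd a 0 u₀) ^ 2 + (pd a 1 u₀) ^ 2))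
        / (2 * (1 * Real.exp (a u₀) + 1)) := by positivity
    rw [neg_div] at h2
    simp only [mul_zero, add_zero, mul_one] at h2
    linarith
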